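/- Let (R,m) be a Noetherian local ring of dimension d > 0, Q an m-primary ideal, K ⊇ Q an ideal, and x ∈ Q with x* G(Q)-superficial and x° F_K(Q)-superficial. Set R̄ = R/(x), Q̄ = QR̄, K̄ = KR̄. Then the Hilbert coefficients satisfy g_i(Q̄) = g_i(Q) for 0 ≤ i ≤ d-2 and g_{d-1}(Q̄) = g_{d-1}(Q) + (-1)^{d-1} ℓ(0 : x). -/

import Mathlib

/-!
For `n ≫ 0`, Artin–Rees and the superficiality of `x*` and `x°` give
`(KQ^{n+1} : x) = KQⁿ + (0 : x)` with `KQⁿ ∩ (0 : x) = 0`. The exact sequences induced by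
multiplication by `x` then yield `ℓ(R̄/K̄Q̄^{n+1}) = ℓ(R/KQ^{n+1}) - ℓ(R/KQⁿ) + ℓ(0 : x)`, so the
Hilbert polynomial of `K̄` is the first difference of that of `K` plus the constant `ℓ(0 : x)`.
Comparing coefficients in the binomial basis gives the claim.
-/

open IsLocalRing

/-- The length of an `R`-module `M`, realized as the Krull dimension of its
lattice of submodules. -/
noncomputable def mLen (R M : Type*) [CommRing R] [AddCommGroup M] [Module R M] :
    WithBot ℕ∞ :=
  Order.krullDim (Submodule R M)

/-- `Q` is a parameter ideal of the `d`-dimensional Noetherian local ring `R`: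
it is generated by `d` elements and is `m`-primary. -/
def IsParameterIdeal (R : Type*) [CommRing R] [IsLocalRing R] (d : ℕ) (Q : Ideal R) : Prop :=
  (∃ x : Fin d → R, Q = Ideal.span (Set.range x)) ∧ Q.radical = maximalIdeal R

/-- There is a regular sequence of length `e` contained in the maximal ideal. -/
def HasRegSeq (R : Type*) [CommRing R] [IsLocalRing R] (e : ℕ) : Prop :=
  ∃ rs : List R, rs.length = e ∧ (∀ r ∈ rs, r ∈ maximalIdeal R) ∧
    RingTheory.Sequence.IsRegular R rs

/-- A Noetherian local ring of dimension `d` is Cohen-Macaulay iff its depth is `d`,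
i.e. iff there is a regular sequence of length `d` in the maximal ideal. -/
def IsCMLocal (R : Type*) [CommRing R] [IsLocalRing R] (d : ℕ) : Prop :=
  HasRegSeq R d

/-- The depth of the local ring `R` equals `e`. -/
def DepthEq (R : Type*) [CommRing R] [IsLocalRing R] (e : ℕ) : Prop :=
  HasRegSeq R e ∧ ¬ HasRegSeq R (e + 1)

/-- `R` is unmixed: every associated prime of the `m`-adic completion `R̂`
has `dim R̂/p = dim R̂`. -/
def IsUnmixed (R : Type*) [CommRing R] [IsLocalRing R] : Prop :=
  ∀ p ∈ associatedPrimes (AdicCompletion (maximalIdeal R) R)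
      (AdicCompletion (maximalIdeal R) R),
    ringKrullDim ((AdicCompletion (maximalIdeal R) R) ⧸ p) =
      ringKrullDim (AdicCompletion (maximalIdeal R) R)

/-- The alternating binomial expansion `Σ_{i=0}^d (-1)^i g_i C(n+d-i-1, d-i)`. -/
def hilbSum (d : ℕ) (g : ℕ → ℤ) (n : ℕ) : ℤ :=
  ∑ i ∈ Finset.range (d + 1), (-1 : ℤ) ^ i * g i * ((n + d - i - 1).choose (d - i) : ℤ)

/-- The alternating binomial expansion `Σ_{i=0}^{d-1} (-1)^i f_i C(n+d-i-1, d-1-i)`. -/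
def fiberSum (d : ℕ) (f : ℕ → ℤ) (n : ℕ) : ℤ :=
  ∑ i ∈ Finset.range d, (-1 : ℤ) ^ i * f i * ((n + d - i - 1).choose (d - 1 - i) : ℤ)

/-- The length `ℓ(Qⁿ/KQⁿ)` of the `n`-th component of the fiber cone `F_K(Q)`. -/
noncomputable def fibLen (R : Type*) [CommRing R] (Q K : Ideal R) (n : ℕ) : WithBot ℕ∞ :=
  mLen R (↥(Q ^ n) ⧸ (Submodule.comap (Submodule.subtype (Q ^ n : Submodule R R))
    (K * Q ^ n : Ideal R)))

/-- `x ∈ Q`, and the degree-one initial form `x*` of `x` in the associated graded ring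
`G(Q)` is nonzero and superficial: `(Qⁿ : x) ∩ Q^c = Q^{n-1}` for all `n > c`. -/
def IsGSuperficial {R : Type*} [CommRing R] (Q : Ideal R) (x : R) : Prop :=
  x ∈ Q ∧ x ∉ Q ^ 2 ∧
    ∃ c > 0, ∀ n > c, Submodule.colon (Q ^ n) (Ideal.span {x}) ⊓ Q ^ c = Q ^ (n - 1)

/-- `x ∈ Q`, and the degree-one initial form `x°` of `x` in the fiber cone `F_K(Q)` is
nonzero and superficial: `(0 : x°) ∩ F_K(Q)_n = 0` for all `n > c`, i.e.
`(KQ^{n+1} : x) ∩ Qⁿ ⊆ KQⁿ` for all `n > c`. -/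
def IsFSuperficial {R : Type*} [CommRing R] (Q K : Ideal R) (x : R) : Prop :=
  x ∈ Q ∧ x ∉ K * Q ∧
    ∃ c > 0, ∀ n > c,
      Submodule.colon (K * Q ^ (n + 1)) (Ideal.span {x}) ⊓ Q ^ n ≤ K * Q ^ n

open Filter

section Length

variable {R M : Type*} [CommRing R] [AddCommGroup M] [Module R M]

lemma mLen_eq_length : mLen R M = Module.length R M :=
  (Module.coe_length R M).symm

lemma Module.length_eq_natCast_of_mLen {n : ℕ} (h : (n : WithBot ℕ∞) = mLen R M) :
    Module.length R M = n := by
  rw [mLen_eq_length] at h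
  exact_mod_cast h.symm

lemma Submodule.length_quotient_eq_length_map_add (N P : Submodule R M) :
    Module.length R (M ⧸ N) = Module.length R (P.map N.mkQ) + Module.length R (M ⧸ (N ⊔ P)) := by
  rw [Module.length_eq_add_of_exact _ _ (P.map N.mkQ).injective_subtype
    (P.map N.mkQ).mkQ_surjective (LinearMap.exact_subtype_mkQ _),
    (Submodule.quotientQuotientEquivQuotientSup N P).length_eq]

lemma Submodule.length_quotient_eq_add_of_inf_eq_bot {N P : Submodule R M} (h : N ⊓ P = ⊥) :
    Module.length R (M ⧸ N) = Module.length R P + Module.length R (M ⧸ (N ⊔ P)) := by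
  have hinj : Function.Injective (N.mkQ ∘ₗ P.subtype) := by
    rw [← LinearMap.ker_eq_bot, LinearMap.ker_comp, Submodule.ker_mkQ, eq_bot_iff]
    intro y hy
    have : (y : M) ∈ N ⊓ P := ⟨hy, y.2⟩
    rw [h] at this
    simpa using this
  have hrange : LinearMap.range (N.mkQ ∘ₗ P.subtype) = P.map N.mkQ := by
    rw [LinearMap.range_comp, Submodule.range_subtype]
  rw [length_quotient_eq_length_map_add N P, ← hrange, (LinearEquiv.ofInjective _ hinj).length_eq]

lemma Ideal.length_quotient_eq_length_quotient_colon_add (J : Ideal R) (x : R) :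
    Module.length R (R ⧸ J) = Module.length R (R ⧸ J.colon (Ideal.span {x})) +
      Module.length R (R ⧸ (J ⊔ Ideal.span {x})) := by
  let φ : R →ₗ[R] R ⧸ J := J.mkQ ∘ₗ LinearMap.toSpanSingleton R R x
  have hker : LinearMap.ker φ = J.colon (Ideal.span {x}) := by
    ext r
    simp only [φ, LinearMap.mem_ker, LinearMap.comp_apply, LinearMap.toSpanSingleton_apply,
      smul_eq_mul, Submodule.mkQ_apply, Submodule.Quotient.mk_eq_zero,
      Ideal.mem_colon_span_singleton]
  have hrange : LinearMap.range φ = Submodule.map J.mkQ (Ideal.span {x}) := by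
    rw [LinearMap.range_comp, ← LinearMap.span_singleton_eq_range, Ideal.submodule_span_eq]
  rw [Submodule.length_quotient_eq_length_map_add J (Ideal.span {x}), ← hrange, ← hker,
    φ.quotKerEquivRange.length_eq]

/-- With `A = (0 : x)`, this compares the two exact sequences
`0 → R/(J : x) → R/J → R/(J + (x)) → 0` and `0 → A → R/I → R/(I + A) → 0`. -/
lemma Ideal.length_quotient_sup_span_add_length_quotient {I J : Ideal R} {x : R}
    (hcolon : J.colon (Ideal.span {x}) = I ⊔ (⊥ : Ideal R).colon (Ideal.span {x}))
    (hdisj : I ⊓ (⊥ : Ideal R).colon (Ideal.span {x}) = ⊥) :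
    Module.length R (R ⧸ (J ⊔ Ideal.span {x})) + Module.length R (R ⧸ I) =
      Module.length R (R ⧸ J) + Module.length R ((⊥ : Ideal R).colon (Ideal.span {x})) := by
  rw [J.length_quotient_eq_length_quotient_colon_add x, hcolon,
    Submodule.length_quotient_eq_add_of_inf_eq_bot hdisj]
  ring

lemma Ideal.length_quotient_map_quotient (I J : Ideal R) :
    Module.length (R ⧸ I) ((R ⧸ I) ⧸ J.map (Ideal.Quotient.mk I)) =
      Module.length R (R ⧸ (I ⊔ J)) := by
  rw [← Module.length_eq_of_surjective (S := R) Ideal.Quotient.mk_surjective]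
  exact (DoubleQuot.quotQuotEquivQuotSupₐ R I J).toLinearEquiv.length_eq

end Length

lemma Ideal.sup_colon_le_colon_mul_pow_succ {R : Type*} [CommRing R] {Q K : Ideal R} {x : R}
    (hx : x ∈ Q) (n : ℕ) :
    K * Q ^ n ⊔ (⊥ : Ideal R).colon (Ideal.span {x}) ≤
      (K * Q ^ (n + 1)).colon (Ideal.span {x}) := by
  refine sup_le (fun z hz => ?_) (Submodule.colon_mono bot_le subset_rfl)
  rw [Ideal.mem_colon_span_singleton, pow_succ, ← mul_assoc]
  exact Ideal.mul_mem_mul hz hx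

section Noetherian

variable {R : Type*} [CommRing R] [IsNoetherianRing R]

lemma Ideal.exists_pow_inf_le_pow_sub_mul (Q N : Ideal R) :
    ∃ k, ∀ n ≥ k, Q ^ n ⊓ N ≤ Q ^ (n - k) * N := by
  obtain ⟨k, hk⟩ := Q.exists_pow_inf_eq_pow_smul (N : Submodule R R)
  refine ⟨k, fun n hn => ?_⟩
  have h := hk n hn
  simp only [Ideal.smul_eq_mul, Ideal.mul_top] at h
  exact h.le.trans (Ideal.mul_mono_right inf_le_right)

lemma Submodule.exists_pow_smul_top_eq_bot {M : Type*} [AddCommGroup M] [Module R M]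
    [Module.Finite R M] [IsArtinian R M] {Q : Ideal R} (hQ : Q ≤ Ideal.jacobson ⊥) :
    ∃ j, Q ^ j • (⊤ : Submodule R M) = ⊥ := by
  obtain ⟨j, hj⟩ := IsArtinian.monotone_stabilizes (R := R) (M := M)
    ⟨fun n => OrderDual.toDual (Q ^ n • ⊤),
      fun _ _ h => Submodule.smul_mono_left (Ideal.pow_le_pow_right h)⟩
  refine ⟨j, Submodule.eq_bot_of_le_smul_of_le_jacobson_bot Q _ (IsNoetherian.noetherian _) ?_ hQ⟩
  have hstable : Q ^ j • (⊤ : Submodule R M) = Q ^ (j + 1) • ⊤ := hj (j + 1) j.le_succ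
  rw [← Submodule.mul_smul, ← pow_succ', ← hstable]

lemma Ideal.eventually_pow_inf_eq_bot {Q A : Ideal R} (hQ : Q ≤ Ideal.jacobson ⊥)
    (hA : Module.length R A ≠ ⊤) : ∀ᶠ n in atTop, Q ^ n ⊓ A = ⊥ := by
  have : IsArtinian R A :=
    (isFiniteLength_iff_isNoetherian_isArtinian.mp (Module.length_ne_top_iff.mp hA)).2
  obtain ⟨j, hj⟩ := Submodule.exists_pow_smul_top_eq_bot (M := A) hQ
  have hjA : Q ^ j * A = ⊥ := by
    simpa [Submodule.map_smul''] using congrArg (Submodule.map A.subtype) hj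
  obtain ⟨k, hk⟩ := Q.exists_pow_inf_le_pow_sub_mul A
  refine eventually_atTop.mpr ⟨k + j, fun n hn => eq_bot_iff.mpr ((hk n (by omega)).trans ?_)⟩
  calc Q ^ (n - k) * A ≤ Q ^ j * A := Ideal.mul_mono_left (Ideal.pow_le_pow_right (by omega))
    _ = ⊥ := hjA

variable {Q K : Ideal R} {x : R}

/-- Artin–Rees writes `y x ∈ KQ^{n+1}` as `z x` with `z ∈ Q^c`; the `G(Q)`-superficiality puts
`z` in `Qⁿ`, and then the `F_K(Q)`-superficiality puts it in `KQⁿ`, while `y - z ∈ (0 : x)`. -/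
lemma IsGSuperficial.eventually_colon_mul_pow_succ_le (hG : IsGSuperficial Q x)
    (hF : IsFSuperficial Q K x) :
    ∀ᶠ n in atTop, (K * Q ^ (n + 1)).colon (Ideal.span {x}) ≤
      K * Q ^ n ⊔ (⊥ : Ideal R).colon (Ideal.span {x}) := by
  obtain ⟨-, -, c, -, hc⟩ := hG
  obtain ⟨-, -, c', -, hc'⟩ := hF
  obtain ⟨k, hk⟩ := Q.exists_pow_inf_le_pow_sub_mul (Ideal.span {x})
  refine eventually_atTop.mpr ⟨c + c' + k + 1, fun n hn y hy => ?_⟩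
  rw [Ideal.mem_colon_span_singleton] at hy
  have hyx : y * x ∈ Q ^ (n + 1) ⊓ Ideal.span {x} :=
    ⟨Ideal.mul_le_right hy, Ideal.mem_span_singleton'.mpr ⟨y, rfl⟩⟩
  obtain ⟨z, hz, hzx⟩ := Ideal.mem_mul_span_singleton.mp (hk (n + 1) (by omega) hyx)
  rw [← hzx] at hy
  have hzQn : z ∈ Q ^ n := by
    have hz' : z ∈ (Q ^ (n + 1)).colon (Ideal.span {x}) ⊓ Q ^ c :=
      ⟨Ideal.mem_colon_span_singleton.mpr (Ideal.mul_le_right hy),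
        Ideal.pow_le_pow_right (by omega) hz⟩
    simpa only [Nat.add_sub_cancel] using (hc (n + 1) (by omega)).le hz'
  have hzK : z ∈ K * Q ^ n := hc' n (by omega) ⟨Ideal.mem_colon_span_singleton.mpr hy, hzQn⟩
  refine Submodule.mem_sup.mpr ⟨z, hzK, y - z, ?_, by ring⟩
  rw [Ideal.mem_colon_span_singleton, sub_mul, hzx, sub_self]
  exact zero_mem _

lemma IsGSuperficial.eventually_length_quotient_add (hQ : Q ≤ Ideal.jacobson ⊥)
    (hG : IsGSuperficial Q x) (hF : IsFSuperficial Q K x)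
    (hA : Module.length R ((⊥ : Ideal R).colon (Ideal.span {x})) ≠ ⊤) :
    ∀ᶠ n in atTop, Module.length R (R ⧸ (K * Q ^ (n + 1) ⊔ Ideal.span {x})) +
        Module.length R (R ⧸ (K * Q ^ n)) =
      Module.length R (R ⧸ (K * Q ^ (n + 1))) +
        Module.length R ((⊥ : Ideal R).colon (Ideal.span {x})) := by
  filter_upwards [hG.eventually_colon_mul_pow_succ_le hF, Ideal.eventually_pow_inf_eq_bot hQ hA]
    with n hcolon hdisj
  refine Ideal.length_quotient_sup_span_add_length_quotient
    (hcolon.antisymm (Ideal.sup_colon_le_colon_mul_pow_succ hG.1 n)) ?_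
  exact eq_bot_iff.mpr ((inf_le_inf_right _ Ideal.mul_le_right).trans hdisj.le)

end Noetherian

section HilbertSum

lemma Filter.eventually_atTop_succ_iff {P : ℕ → Prop} :
    (∀ᶠ n in atTop, P (n + 1)) ↔ ∀ᶠ n in atTop, P n := by
  rw [← eventually_map, map_add_atTop_eq_nat]

lemma hilbSum_sub (e : ℕ) (a b : ℕ → ℤ) (n : ℕ) :
    hilbSum e (a - b) n = hilbSum e a n - hilbSum e b n := by
  simp only [hilbSum, ← Finset.sum_sub_distrib, Pi.sub_apply, mul_sub, sub_mul]

lemma hilbSum_succ_sub (e : ℕ) (a : ℕ → ℤ) (n : ℕ) :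
    hilbSum (e + 1) a (n + 1) - hilbSum (e + 1) a n = hilbSum e a (n + 1) := by
  rw [hilbSum, hilbSum, Finset.sum_range_succ _ (e + 1), Finset.sum_range_succ _ (e + 1)]
  simp only [Nat.sub_self, Nat.choose_zero_right]
  rw [add_sub_add_right_eq_sub, ← Finset.sum_sub_distrib, hilbSum]
  refine Finset.sum_congr rfl fun i hi => ?_
  have hi : i ≤ e := Nat.lt_succ_iff.mp (Finset.mem_range.mp hi)
  rw [show n + 1 + (e + 1) - i - 1 = (n + e - i) + 1 by omega,
    show n + (e + 1) - i - 1 = n + e - i by omega, show e + 1 - i = (e - i) + 1 by omega,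
    show n + 1 + e - i - 1 = n + e - i by omega, Nat.choose_succ_succ]
  push_cast
  ring

lemma eq_zero_of_eventually_hilbSum_eq_zero {e : ℕ} {c : ℕ → ℤ}
    (h : ∀ᶠ n in atTop, hilbSum e c n = 0) : ∀ i ≤ e, c i = 0 := by
  induction e with
  | zero =>
    obtain ⟨n, hn⟩ := h.exists
    simpa [hilbSum] using hn
  | succ e ih =>
    have hlow : ∀ i ≤ e, c i = 0 := ih <| eventually_atTop_succ_iff.mp <| by
      filter_upwards [h, eventually_atTop_succ_iff.mpr h] with n hn hn1
      rw [← hilbSum_succ_sub, hn, hn1, sub_zero]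
    obtain ⟨n, hn⟩ := h.exists
    rw [hilbSum, Finset.sum_range_succ, Finset.sum_eq_zero fun i hi => by
      rw [hlow i (Nat.lt_succ_iff.mp (Finset.mem_range.mp hi)), mul_zero, zero_mul]] at hn
    intro i hi
    rcases hi.lt_or_eq with hi | rfl
    · exact hlow i (Nat.lt_succ_iff.mp hi)
    · simpa using hn

lemma hilbSum_update_top (e : ℕ) (g : ℕ → ℤ) (l : ℤ) (n : ℕ) :
    hilbSum e (Function.update g e (g e + (-1) ^ e * l)) n = hilbSum e g n + l := by
  rw [hilbSum, hilbSum, Finset.sum_range_succ, Finset.sum_range_succ,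
    Finset.sum_congr rfl fun i hi => by
      rw [Function.update_of_ne (Finset.mem_range.mp hi).ne]]
  simp only [Function.update_self, Nat.sub_self, Nat.choose_zero_right, Nat.cast_one, mul_one]
  have hsq : ((-1 : ℤ) ^ e) * (-1) ^ e = 1 := by rw [← mul_pow]; simp
  linear_combination l * hsq

lemma eq_update_of_eventually_hilbSum {e : ℕ} {a b g gbar : ℕ → ℤ} {l : ℤ}
    (hb : ∀ᶠ n in atTop, b n = hilbSum (e + 1) g n)
    (ha : ∀ᶠ n in atTop, a n = hilbSum e gbar n)
    (hab : ∀ᶠ n in atTop, a (n + 1) + b n = b (n + 1) + l) :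
    ∀ i ≤ e, gbar i = Function.update g e (g e + (-1) ^ e * l) i := by
  refine fun i hi => sub_eq_zero.mp
    (eq_zero_of_eventually_hilbSum_eq_zero (c := gbar - Function.update g e _) ?_ i hi)
  refine eventually_atTop_succ_iff.mp ?_
  filter_upwards [eventually_atTop_succ_iff.mpr ha, hb, eventually_atTop_succ_iff.mpr hb, hab]
    with n ha hb hb1 hab
  rw [hilbSum_sub, hilbSum_update_top, ← hilbSum_succ_sub e g, ← ha, ← hb, ← hb1]
  linarith

end HilbertSum

theorem stmt_6_general (R : Type) [CommRing R] [IsLocalRing R] [IsNoetherianRing R]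
    (d : ℕ) (hd : 0 < d)
    (Q K : Ideal R) (hQprim : Q.radical = maximalIdeal R)
    (x : R) (hG : IsGSuperficial Q x) (hF : IsFSuperficial Q K x)
    (lenK lenKbar : ℕ → ℕ)
    (hlenK : ∀ n, (lenK n : WithBot ℕ∞) = mLen R (R ⧸ (K * Q ^ n)))
    (hlenKbar : ∀ n, (lenKbar n : WithBot ℕ∞) =
      mLen (R ⧸ Ideal.span {x}) ((R ⧸ Ideal.span {x}) ⧸
        (K.map (Ideal.Quotient.mk (Ideal.span {x})) *
          (Q.map (Ideal.Quotient.mk (Ideal.span {x}))) ^ n)))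
    (g gbar : ℕ → ℤ)
    (hg : ∃ N, ∀ n ≥ N, (lenK n : ℤ) = hilbSum d g n)
    (hgbar : ∃ N, ∀ n ≥ N, (lenKbar n : ℤ) = hilbSum (d - 1) gbar n)
    (lAnn : ℕ)
    (hlAnn : (lAnn : WithBot ℕ∞) = mLen R ↥(Submodule.colon (⊥ : Ideal R) (Ideal.span {x}))) :
    (∀ i, i + 2 ≤ d → gbar i = g i) ∧
    gbar (d - 1) = g (d - 1) + (-1 : ℤ) ^ (d - 1) * (lAnn : ℤ) := by
  obtain ⟨e, rfl⟩ : ∃ e, d = e + 1 := ⟨d - 1, by omega⟩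
  simp only [add_tsub_cancel_right] at hgbar ⊢
  have hQ : Q ≤ Ideal.jacobson ⊥ :=
    (Ideal.le_radical.trans hQprim.le).trans (maximalIdeal_le_jacobson _)
  have hA := Module.length_eq_natCast_of_mLen hlAnn
  have hlen (n : ℕ) := Module.length_eq_natCast_of_mLen (hlenK n)
  have hlenbar (n : ℕ) : Module.length R (R ⧸ (K * Q ^ n ⊔ Ideal.span {x})) = lenKbar n := by
    rw [← Module.length_eq_natCast_of_mLen (hlenKbar n), ← Ideal.map_pow, ← Ideal.map_mul,
      Ideal.length_quotient_map_quotient, sup_comm]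
  have hrec : ∀ᶠ n in atTop, (lenKbar (n + 1) : ℤ) + lenK n = lenK (n + 1) + lAnn := by
    filter_upwards [hG.eventually_length_quotient_add hQ hF (by simp [hA])] with n h
    rw [hlenbar, hlen, hlen, hA] at h
    exact_mod_cast h
  have hcoeff := eq_update_of_eventually_hilbSum (eventually_atTop.mpr hg)
    (eventually_atTop.mpr hgbar) hrec
  refine ⟨fun i hi => ?_, ?_⟩
  · rw [hcoeff i (by omega), Function.update_of_ne (by omega)]
  · rw [hcoeff e le_rfl, Function.update_self]

/-- behaviour of the Hilbert coefficients `g_i` modulo a superficial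
element: `g_i(Q̄) = g_i(Q)` for `0 ≤ i ≤ d-2` and
`g_{d-1}(Q̄) = g_{d-1}(Q) + (-1)^{d-1} ℓ(0 : x)`. -/
theorem stmt_6 (R : Type) [CommRing R] [IsLocalRing R] [IsNoetherianRing R]
    (d : ℕ) (hd : 0 < d) (hdim : ringKrullDim R = d)
    (Q K : Ideal R) (hQprim : Q.radical = maximalIdeal R) (hQK : Q ≤ K)
    (x : R) (hG : IsGSuperficial Q x) (hF : IsFSuperficial Q K x)
    (lenK lenKbar : ℕ → ℕ)
    (hlenK : ∀ n, (lenK n : WithBot ℕ∞) = mLen R (R ⧸ (K * Q ^ n)))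
    (hlenKbar : ∀ n, (lenKbar n : WithBot ℕ∞) =
      mLen (R ⧸ Ideal.span {x}) ((R ⧸ Ideal.span {x}) ⧸
        (K.map (Ideal.Quotient.mk (Ideal.span {x})) *
          (Q.map (Ideal.Quotient.mk (Ideal.span {x}))) ^ n)))
    (g gbar : ℕ → ℤ)
    (hg : ∃ N, ∀ n ≥ N, (lenK n : ℤ) = hilbSum d g n)
    (hgbar : ∃ N, ∀ n ≥ N, (lenKbar n : ℤ) = hilbSum (d - 1) gbar n)
    (lAnn : ℕ)
    (hlAnn : (lAnn : WithBot ℕ∞) = mLen R ↥(Submodule.colon (⊥ : Ideal R) (Ideal.span {x}))) :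
    (∀ i, i + 2 ≤ d → gbar i = g i) ∧
    gbar (d - 1) = g (d - 1) + (-1 : ℤ) ^ (d - 1) * (lAnn : ℤ) :=
  stmt_6_general R d hd Q K hQprim x hG hF lenK lenKbar hlenK hlenKbar g gbar hg hgbar lAnn hlAnn
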